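/- arXiv:1705.03761 — 6 statements merged into one kernel-verified Lean document; each statement's English description precedes it below -/
import Mathlib

section
/- For all i ≠ j, one has Pᵢ A₊A₋A₊ Pⱼ + Pⱼ A₊A₋A₊ Pᵢ = Pᵢ Pⱼ A₊A₋A₊ + A₊A₋A₊ Pᵢ Pⱼ, and likewise Pᵢ A₋A₊A₋ Pⱼ + Pⱼ A₋A₊A₋ Pᵢ = Pᵢ Pⱼ A₋A₊A₋ + A₋A₊A₋ Pᵢ Pⱼ. -/
/-!
Write `W = B C B` with `B C + C B = D`, so `W = B D - B² C`. If `Y` commutes with `D` and `B²`,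
then `[Y, W] = [Y, B] D - B² [Y, C]`, and an `X` commuting with `D`, `B²`, `[Y, B]`, `[Y, C]`
therefore commutes with `[Y, W]`. Together with `X Y = Y X` this rearranges to
`X W Y + Y W X = X Y W + W X Y`. For `X = Pᵢ`, `Y = Pⱼ`, `D = 2A₀` and `(B, C) = (A₊, A₋)`
or `(A₋, A₊)` these are exactly the given relations.
-/

/-- Product of pairwise-commuting elements `P s₁ ⋯ P s_k` over a finite index subset `S`. -/
def PS {R : Type*} [Monoid R] {n : ℕ} (P : Fin n → R)
    (hP : ∀ i j : Fin n, Commute (P i) (P j)) (S : Finset (Fin n)) : R :=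
  S.noncommProd P fun i _ j _ _ => hP i j

/-- The centralizing element `C_X = ¼{A₋, [A₊, X]} − ½X` built from an involution `X`. -/
noncomputable def Cgen {R : Type*} [Ring R] [Algebra ℂ R] (Am Ap X : R) : R :=
  (4 : ℂ)⁻¹ • (Am * (Ap * X - X * Ap) + (Ap * X - X * Ap) * Am) - (2 : ℂ)⁻¹ • X

section Sandwich

variable {R : Type*} [Ring R] {X Y B C D W : R}

theorem sandwich_eq_of_add_eq (h : B * C + C * B = D) : B * C * B = B * D - B * B * C := by
  rw [mul_assoc, ← h]
  noncomm_ring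

theorem commutator_sandwich_eq (h : B * C + C * B = D) (hYD : Commute Y D)
    (hYB : Commute Y (B * B)) :
    Y * (B * C * B) - B * C * B * Y = (Y * B - B * Y) * D - B * B * (Y * C - C * Y) := by
  rw [sandwich_eq_of_add_eq h, ← sub_eq_zero]
  calc Y * (B * D - B * B * C) - (B * D - B * B * C) * Y
        - ((Y * B - B * Y) * D - B * B * (Y * C - C * Y))
      = B * (Y * D - D * Y) - (Y * (B * B) - B * B * Y) * C := by noncomm_ring
    _ = 0 := by rw [sub_eq_zero.2 hYD.eq, sub_eq_zero.2 hYB.eq]; simp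

theorem Commute.commutator_sandwich (hXD : Commute X D) (h : B * C + C * B = D)
    (hYD : Commute Y D) (hYB : Commute Y (B * B)) (hXB : Commute X (B * B))
    (hXYB : Commute X (Y * B - B * Y)) (hXYC : Commute X (Y * C - C * Y)) :
    Commute X (Y * (B * C * B) - B * C * B * Y) := by
  rw [commutator_sandwich_eq h hYD hYB]
  exact (hXYB.mul_right hXD).sub_right (hXB.mul_right hXYC)

theorem mul_mul_add_mul_mul_eq (hXY : Commute X Y) (hXW : Commute X (Y * W - W * Y)) :
    X * W * Y + Y * W * X = X * Y * W + W * (X * Y) := by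
  rw [← sub_eq_zero]
  calc X * W * Y + Y * W * X - (X * Y * W + W * (X * Y))
      = (Y * W - W * Y) * X - X * (Y * W - W * Y) + W * (Y * X - X * Y) := by noncomm_ring
    _ = 0 := by rw [hXW.eq, hXY.eq]; simp

theorem sandwich_mul_add_mul_sandwich_eq (h : B * C + C * B = D) (hXY : Commute X Y)
    (hXD : Commute X D) (hYD : Commute Y D) (hXB : Commute X (B * B)) (hYB : Commute Y (B * B))
    (hXYB : Commute X (Y * B - B * Y)) (hXYC : Commute X (Y * C - C * Y)) :
    X * (B * C * B) * Y + Y * (B * C * B) * X = X * Y * (B * C * B) + B * C * B * (X * Y) :=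
  mul_mul_add_mul_mul_eq hXY (hXD.commutator_sandwich h hYD hYB hXB hXYB hXYC)

end Sandwich

theorem stmt1_general
    {R : Type*} [Ring R] {n : ℕ}
    (A₀ Ap Am : R) (P : Fin n → R)
    (hPcomm : ∀ i j : Fin n, Commute (P i) (P j))
    (hpm : Ap * Am + Am * Ap = 2 * A₀)
    (hPiA0 : ∀ i, P i * A₀ = A₀ * P i)
    (hPiBp : ∀ i, P i * (Ap * Ap) = (Ap * Ap) * P i)
    (hPiBm : ∀ i, P i * (Am * Am) = (Am * Am) * P i)
    (hPPAp : ∀ i j, i ≠ j → P i * (P j * Ap - Ap * P j) = (P j * Ap - Ap * P j) * P i)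
    (hPPAm : ∀ i j, i ≠ j → P i * (P j * Am - Am * P j) = (P j * Am - Am * P j) * P i)
    :
    ∀ i j : Fin n, i ≠ j →
      (P i * (Ap * Am * Ap) * P j + P j * (Ap * Am * Ap) * P i
        = P i * P j * (Ap * Am * Ap) + Ap * Am * Ap * (P i * P j)) ∧
      (P i * (Am * Ap * Am) * P j + P j * (Am * Ap * Am) * P i
        = P i * P j * (Am * Ap * Am) + Am * Ap * Am * (P i * P j)) := by
  intro i j hij
  have hA0 : ∀ k, Commute (P k) (2 * A₀) := fun k =>
    (Commute.ofNat_right _ 2).mul_right (hPiA0 k)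
  exact ⟨sandwich_mul_add_mul_sandwich_eq hpm (hPcomm i j) (hA0 i) (hA0 j) (hPiBp i) (hPiBp j)
      (hPPAp i j hij) (hPPAm i j hij),
    sandwich_mul_add_mul_sandwich_eq (by rwa [add_comm]) (hPcomm i j) (hA0 i) (hA0 j)
      (hPiBm i) (hPiBm j) (hPPAm i j hij) (hPPAp i j hij)⟩

theorem stmt1
    {R : Type*} [Ring R] [Algebra ℂ R] {n : ℕ}
    (A₀ Ap Am Pb : R) (P : Fin n → R)
    (hPcomm : ∀ i j : Fin n, Commute (P i) (P j))
    (hPb : Pb = PS P hPcomm Finset.univ)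
    (hPsq : Pb * Pb = 1)
    (hPA0 : Pb * A₀ = A₀ * Pb)
    (hPAp : Pb * Ap + Ap * Pb = 0)
    (hPAm : Pb * Am + Am * Pb = 0)
    (hA0p : A₀ * Ap - Ap * A₀ = Ap)
    (hA0m : A₀ * Am - Am * A₀ = -Am)
    (hpm : Ap * Am + Am * Ap = 2 * A₀)
    (hPi2 : ∀ i, P i * P i = 1)
    (hPiA0 : ∀ i, P i * A₀ = A₀ * P i)
    (hPiBp : ∀ i, P i * (Ap * Ap) = (Ap * Ap) * P i)
    (hPiBm : ∀ i, P i * (Am * Am) = (Am * Am) * P i)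
    (hPPAp : ∀ i j, i ≠ j → P i * (P j * Ap - Ap * P j) = (P j * Ap - Ap * P j) * P i)
    (hPPAm : ∀ i j, i ≠ j → P i * (P j * Am - Am * P j) = (P j * Am - Am * P j) * P i)
    :
    ∀ i j : Fin n, i ≠ j →
      (P i * (Ap * Am * Ap) * P j + P j * (Ap * Am * Ap) * P i
        = P i * P j * (Ap * Am * Ap) + Ap * Am * Ap * (P i * P j)) ∧
      (P i * (Am * Ap * Am) * P j + P j * (Am * Ap * Am) * P i
        = P i * P j * (Am * Ap * Am) + Am * Ap * Am * (P i * P j)) :=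
  stmt1_general A₀ Ap Am P hPcomm hpm hPiA0 hPiBp hPiBm hPPAp hPPAm
end

section
/- For every subset S of {1,…,n}, the element C_S = ¼{A₋, [A₊, P_S]} − ½P_S centralizes osp(1,2): [C_S, A₀] = 0, [C_S, A₊] = 0, [C_S, A₋] = 0, and [C_S, P] = 0. -/
section Ring

variable {R : Type*} [Ring R]

lemma commute_PS {n : ℕ} {P : Fin n → R} (hP : ∀ i j, Commute (P i) (P j)) (S : Finset (Fin n))
    {Z : R} (hZ : ∀ i, Commute (P i) Z) : Commute (PS P hP S) Z :=
  (S.noncommProd_commute P _ Z fun i _ => (hZ i).symm).symm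

lemma comm_sub_comm_of_commute {h a X : R} (hX : Commute X h) :
    h * (a * X - X * a) - (a * X - X * a) * h = (h * a - a * h) * X - X * (h * a - a * h) := by
  linear_combination (norm := noncomm_ring) -(a * hX.eq) + hX.eq * a

lemma anticomm_comm_self (a X : R) :
    a * (a * X - X * a) + (a * X - X * a) * a = a * a * X - X * (a * a) := by
  noncomm_ring

lemma comm_anticomm_of_anticomm {a b Y : R} (hY : a * Y + Y * a = 0) :
    (b * Y + Y * b) * a - a * (b * Y + Y * b) = Y * (a * b + b * a) - (a * b + b * a) * Y := by
  linear_combination (norm := noncomm_ring) b * hY - hY * b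

def fourCgen (Am Ap X : R) : R :=
  Am * (Ap * X - X * Ap) + (Ap * X - X * Ap) * Am - 2 * X

variable {A₀ Ap Am X : R}

lemma fourCgen_commute_A₀ (hXA₀ : Commute X A₀) (hA₀p : A₀ * Ap - Ap * A₀ = Ap)
    (hA₀m : A₀ * Am - Am * A₀ = -Am) : Commute (fourCgen Am Ap X) A₀ := by
  have hB := comm_sub_comm_of_commute (a := Ap) hXA₀
  rw [hA₀p] at hB
  show fourCgen Am Ap X * A₀ = A₀ * fourCgen Am Ap X
  unfold fourCgen
  linear_combination (norm := noncomm_ring) -(Am * hB) - hB * Am - hA₀m * (Ap * X - X * Ap)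
    - (Ap * X - X * Ap) * hA₀m - 2 * hXA₀.eq

lemma fourCgen_commute_Ap (hXA₀ : Commute X A₀) (hXp : Commute X (Ap * Ap))
    (hA₀p : A₀ * Ap - Ap * A₀ = Ap) (hpm : Ap * Am + Am * Ap = 2 * A₀) :
    Commute (fourCgen Am Ap X) Ap := by
  have hB := comm_sub_comm_of_commute (a := Ap) hXA₀
  rw [hA₀p] at hB
  have hanti : Ap * (Ap * X - X * Ap) + (Ap * X - X * Ap) * Ap = 0 := by
    rw [anticomm_comm_self, hXp.eq, sub_self]
  have hcomm := comm_anticomm_of_anticomm (b := Am) hanti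
  rw [hpm] at hcomm
  show fourCgen Am Ap X * Ap = Ap * fourCgen Am Ap X
  unfold fourCgen
  linear_combination (norm := noncomm_ring) hcomm - 2 * hB

lemma fourCgen_commute_Am (hXA₀ : Commute X A₀) (hXm : Commute X (Am * Am))
    (hA₀m : A₀ * Am - Am * A₀ = -Am) (hpm : Ap * Am + Am * Ap = 2 * A₀) :
    Commute (fourCgen Am Ap X) Am := by
  have hB' := comm_sub_comm_of_commute (a := Am) hXA₀
  rw [hA₀m] at hB'
  have hanti : Am * (Am * X - X * Am) + (Am * X - X * Am) * Am = 0 := by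
    rw [anticomm_comm_self, hXm.eq, sub_self]
  have hcomm := comm_anticomm_of_anticomm (b := Ap) hanti
  -- `{A₋, [A₊, X]} + {A₊, [A₋, X]} = [{A₊, A₋}, X] = 2[A₀, X] = 0`
  have hswap : Am * (Ap * X - X * Ap) + (Ap * X - X * Ap) * Am
      = -(Ap * (Am * X - X * Am) + (Am * X - X * Am) * Ap) := by
    linear_combination (norm := noncomm_ring) hpm * X - X * hpm - 2 * hXA₀.eq
  show fourCgen Am Ap X * Am = Am * fourCgen Am Ap X
  unfold fourCgen
  rw [hswap]
  linear_combination (norm := noncomm_ring) -hcomm + 2 * hB'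
    - (Am * X - X * Am) * hpm + hpm * (Am * X - X * Am)

lemma fourCgen_commute_of_anticomm {Pb : R} (hXP : Commute X Pb) (hPAp : Pb * Ap + Ap * Pb = 0)
    (hPAm : Pb * Am + Am * Pb = 0) : Commute (fourCgen Am Ap X) Pb := by
  have hPB : Pb * (Ap * X - X * Ap) + (Ap * X - X * Ap) * Pb = 0 := by
    linear_combination (norm := noncomm_ring) hPAp * X + Ap * hXP.eq - X * hPAp + hXP.eq * Ap
  show fourCgen Am Ap X * Pb = Pb * fourCgen Am Ap X
  unfold fourCgen
  linear_combination (norm := noncomm_ring) -hPAm * (Ap * X - X * Ap) + Am * hPB - hPB * Am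
    + (Ap * X - X * Ap) * hPAm - 2 * hXP.eq

lemma Cgen_eq_smul_fourCgen [Algebra ℂ R] (Am Ap X : R) :
    Cgen Am Ap X = (4 : ℂ)⁻¹ • fourCgen Am Ap X := by
  have half : (2 : ℂ)⁻¹ • X = (4 : ℂ)⁻¹ • (2 * X) := by
    rw [two_mul, ← two_smul ℂ X, smul_smul]
    norm_num
  rw [Cgen, fourCgen, smul_sub, half]

end Ring

theorem stmt3_general
    {R : Type*} [Ring R] [Algebra ℂ R] {n : ℕ}
    (A₀ Ap Am Pb : R) (P : Fin n → R)
    (hPcomm : ∀ i j : Fin n, Commute (P i) (P j))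
    (hPb : Pb = PS P hPcomm Finset.univ)
    (hPAp : Pb * Ap + Ap * Pb = 0)
    (hPAm : Pb * Am + Am * Pb = 0)
    (hA0p : A₀ * Ap - Ap * A₀ = Ap)
    (hA0m : A₀ * Am - Am * A₀ = -Am)
    (hpm : Ap * Am + Am * Ap = 2 * A₀)
    (hPiA0 : ∀ i, P i * A₀ = A₀ * P i)
    (hPiBp : ∀ i, P i * (Ap * Ap) = (Ap * Ap) * P i)
    (hPiBm : ∀ i, P i * (Am * Am) = (Am * Am) * P i)
    :
    ∀ S : Finset (Fin n),
      Cgen Am Ap (PS P hPcomm S) * A₀ - A₀ * Cgen Am Ap (PS P hPcomm S) = 0 ∧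
      Cgen Am Ap (PS P hPcomm S) * Ap - Ap * Cgen Am Ap (PS P hPcomm S) = 0 ∧
      Cgen Am Ap (PS P hPcomm S) * Am - Am * Cgen Am Ap (PS P hPcomm S) = 0 ∧
      Cgen Am Ap (PS P hPcomm S) * Pb - Pb * Cgen Am Ap (PS P hPcomm S) = 0 := by
  intro S
  have hXA₀ := commute_PS hPcomm S hPiA0
  have hXp := commute_PS hPcomm S hPiBp
  have hXm := commute_PS hPcomm S hPiBm
  have hXP : Commute (PS P hPcomm S) Pb :=
    hPb ▸ (commute_PS hPcomm Finset.univ fun i =>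
      (commute_PS hPcomm S fun j => hPcomm j i).symm).symm
  have centralizes {Z : R} (h : Commute (fourCgen Am Ap (PS P hPcomm S)) Z) :
      Cgen Am Ap (PS P hPcomm S) * Z - Z * Cgen Am Ap (PS P hPcomm S) = 0 := by
    rw [Cgen_eq_smul_fourCgen, sub_eq_zero]
    exact (h.smul_left _).eq
  exact ⟨centralizes (fourCgen_commute_A₀ hXA₀ hA0p hA0m),
    centralizes (fourCgen_commute_Ap hXA₀ hXp hA0p hpm),
    centralizes (fourCgen_commute_Am hXA₀ hXm hA0m hpm),
    centralizes (fourCgen_commute_of_anticomm hXP hPAp hPAm)⟩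

theorem stmt3
    {R : Type*} [Ring R] [Algebra ℂ R] {n : ℕ}
    (A₀ Ap Am Pb : R) (P : Fin n → R)
    (hPcomm : ∀ i j : Fin n, Commute (P i) (P j))
    (hPb : Pb = PS P hPcomm Finset.univ)
    (hPsq : Pb * Pb = 1)
    (hPA0 : Pb * A₀ = A₀ * Pb)
    (hPAp : Pb * Ap + Ap * Pb = 0)
    (hPAm : Pb * Am + Am * Pb = 0)
    (hA0p : A₀ * Ap - Ap * A₀ = Ap)
    (hA0m : A₀ * Am - Am * A₀ = -Am)
    (hpm : Ap * Am + Am * Ap = 2 * A₀)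
    (hPi2 : ∀ i, P i * P i = 1)
    (hPiA0 : ∀ i, P i * A₀ = A₀ * P i)
    (hPiBp : ∀ i, P i * (Ap * Ap) = (Ap * Ap) * P i)
    (hPiBm : ∀ i, P i * (Am * Am) = (Am * Am) * P i)
    (hPPAp : ∀ i j, i ≠ j → P i * (P j * Ap - Ap * P j) = (P j * Ap - Ap * P j) * P i)
    (hPPAm : ∀ i j, i ≠ j → P i * (P j * Am - Am * P j) = (P j * Am - Am * P j) * P i)
    :
    ∀ S : Finset (Fin n),
      Cgen Am Ap (PS P hPcomm S) * A₀ - A₀ * Cgen Am Ap (PS P hPcomm S) = 0 ∧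
      Cgen Am Ap (PS P hPcomm S) * Ap - Ap * Cgen Am Ap (PS P hPcomm S) = 0 ∧
      Cgen Am Ap (PS P hPcomm S) * Am - Am * Cgen Am Ap (PS P hPcomm S) = 0 ∧
      Cgen Am Ap (PS P hPcomm S) * Pb - Pb * Cgen Am Ap (PS P hPcomm S) = 0 :=
  stmt3_general A₀ Ap Am Pb P hPcomm hPb hPAp hPAm hA0p hA0m hpm hPiA0 hPiBp hPiBm
end

section
/- The 1-index elements Cᵢ = ¼{A₋, [A₊, Pᵢ]} − ½Pᵢ satisfy Cᵢ Pⱼ + Cⱼ Pᵢ = Pᵢ Cⱼ + Pⱼ Cᵢ for all i ≠ j; equivalently, [Cᵢ, Pⱼ] = −[Cⱼ, Pᵢ] for i ≠ j. -/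
/-!
Write `X_p = {A₋, [A₊, p]}` and `Y_p = {A₊, [A₋, p]}`. Then `X_p + Y_p = [{A₋, A₊}, p] = 2[A₀, p]`,
so `X_i = -Y_i`. The Leibniz rule `[{a, b}, c] = {a, [b, c]} + {[a, c], b}` together with
`[[A₋, P_i], P_j] = 0` and `[[A₊, P_j], P_i] = 0` gives
`[Y_i, P_j] = {[A₊, P_j], [A₋, P_i]} = [X_j, P_i]`, hence `[X_i, P_j] + [X_j, P_i] = 0`.
The term `-½P` of `C` contributes `-½([P_i, P_j] + [P_j, P_i]) = 0`.
-/

section Commutators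

attribute [local instance] LieRing.ofAssociativeRing

variable {R : Type*} [Ring R]

theorem lie_anticomm (a b c : R) :
    ⁅a * b + b * a, c⁆ = a * ⁅b, c⁆ + ⁅b, c⁆ * a + (⁅a, c⁆ * b + b * ⁅a, c⁆) := by
  simp only [Ring.lie_def]
  noncomm_ring

theorem lie_anticomm_lie_of_lie_lie_eq_zero {a b p q : R} (h : ⁅⁅b, p⁆, q⁆ = 0) :
    ⁅a * ⁅b, p⁆ + ⁅b, p⁆ * a, q⁆ = ⁅a, q⁆ * ⁅b, p⁆ + ⁅b, p⁆ * ⁅a, q⁆ := by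
  rw [lie_anticomm, h, mul_zero, zero_mul, add_zero, zero_add]

theorem anticomm_lie_add_anticomm_lie (a b p : R) :
    a * ⁅b, p⁆ + ⁅b, p⁆ * a + (b * ⁅a, p⁆ + ⁅a, p⁆ * b) = ⁅a * b + b * a, p⁆ := by
  simp only [Ring.lie_def]
  noncomm_ring

theorem lie_anticomm_lie_add_lie_anticomm_lie {a b p q : R}
    (hab : ⁅a * b + b * a, p⁆ = 0) (hap : ⁅⁅a, p⁆, q⁆ = 0) (hbq : ⁅⁅b, q⁆, p⁆ = 0) :
    ⁅a * ⁅b, p⁆ + ⁅b, p⁆ * a, q⁆ + ⁅a * ⁅b, q⁆ + ⁅b, q⁆ * a, p⁆ = 0 := by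
  have hY : ⁅b * ⁅a, p⁆ + ⁅a, p⁆ * b, q⁆ = ⁅a * ⁅b, q⁆ + ⁅b, q⁆ * a, p⁆ := by
    rw [lie_anticomm_lie_of_lie_lie_eq_zero hap, lie_anticomm_lie_of_lie_lie_eq_zero hbq,
      add_comm]
  rw [← hY, ← add_lie, anticomm_lie_add_anticomm_lie, hab, zero_lie]

theorem lie_lie_eq_zero_of_commute_lie {a x y : R}
    (h : y * (x * a - a * x) = (x * a - a * x) * y) : ⁅⁅a, x⁆, y⁆ = 0 := by
  rw [← lie_skew, ← lie_skew a x, lie_neg, neg_neg]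
  exact commute_iff_lie_eq.mp h

end Commutators

section Cgen

attribute [local instance] LieRing.ofAssociativeRing

variable {R : Type*} [Ring R] [Algebra ℂ R]

theorem lie_Cgen (Am Ap x y : R) :
    ⁅Cgen Am Ap x, y⁆ = (4 : ℂ)⁻¹ • ⁅Am * ⁅Ap, x⁆ + ⁅Ap, x⁆ * Am, y⁆ - (2 : ℂ)⁻¹ • ⁅x, y⁆ := by
  simp only [Cgen, Ring.lie_def, sub_mul, mul_sub, smul_mul_assoc, mul_smul_comm, smul_sub]
  abel

theorem lie_Cgen_add_lie_Cgen {Am Ap p q : R}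
    (hpm : ⁅Am * Ap + Ap * Am, p⁆ = 0) (hAmp : ⁅⁅Am, p⁆, q⁆ = 0) (hApq : ⁅⁅Ap, q⁆, p⁆ = 0) :
    ⁅Cgen Am Ap p, q⁆ + ⁅Cgen Am Ap q, p⁆ = 0 := by
  calc _ = (4 : ℂ)⁻¹ • (⁅Am * ⁅Ap, p⁆ + ⁅Ap, p⁆ * Am, q⁆ + ⁅Am * ⁅Ap, q⁆ + ⁅Ap, q⁆ * Am, p⁆) := by
        rw [lie_Cgen, lie_Cgen, ← lie_skew q p, smul_add, smul_neg]; abel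
    _ = 0 := by rw [lie_anticomm_lie_add_lie_anticomm_lie hpm hAmp hApq, smul_zero]

end Cgen

theorem stmt6_general
    {R : Type*} [Ring R] [Algebra ℂ R] {n : ℕ}
    (A₀ Ap Am : R) (P : Fin n → R)
    (hpm : Ap * Am + Am * Ap = 2 * A₀)
    (hPiA0 : ∀ i, P i * A₀ = A₀ * P i)
    (hPPAp : ∀ i j, i ≠ j → P i * (P j * Ap - Ap * P j) = (P j * Ap - Ap * P j) * P i)
    (hPPAm : ∀ i j, i ≠ j → P i * (P j * Am - Am * P j) = (P j * Am - Am * P j) * P i)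
    :
    ∀ i j : Fin n, i ≠ j →
      (Cgen Am Ap (P i) * P j + Cgen Am Ap (P j) * P i
        = P i * Cgen Am Ap (P j) + P j * Cgen Am Ap (P i)) ∧
      (Cgen Am Ap (P i) * P j - P j * Cgen Am Ap (P i)
        = -(Cgen Am Ap (P j) * P i - P i * Cgen Am Ap (P j))) := by
  intro i j hij
  have hA₀ : ⁅Am * Ap + Ap * Am, P i⁆ = 0 := by
    rw [add_comm, hpm, ← commute_iff_lie_eq]
    exact (Commute.ofNat_left 2 (P i)).mul_left (hPiA0 i : Commute (P i) A₀).symm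
  have h := lie_Cgen_add_lie_Cgen hA₀
    (lie_lie_eq_zero_of_commute_lie (hPPAm j i hij.symm))
    (lie_lie_eq_zero_of_commute_lie (hPPAp i j hij))
  simp only [Ring.lie_def] at h
  constructor
  · rw [← sub_eq_zero, ← h]
    abel
  · rw [eq_neg_iff_add_eq_zero]
    exact h

theorem stmt6
    {R : Type*} [Ring R] [Algebra ℂ R] {n : ℕ}
    (A₀ Ap Am Pb : R) (P : Fin n → R)
    (hPcomm : ∀ i j : Fin n, Commute (P i) (P j))
    (hPb : Pb = PS P hPcomm Finset.univ)
    (hPsq : Pb * Pb = 1)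
    (hPA0 : Pb * A₀ = A₀ * Pb)
    (hPAp : Pb * Ap + Ap * Pb = 0)
    (hPAm : Pb * Am + Am * Pb = 0)
    (hA0p : A₀ * Ap - Ap * A₀ = Ap)
    (hA0m : A₀ * Am - Am * A₀ = -Am)
    (hpm : Ap * Am + Am * Ap = 2 * A₀)
    (hPi2 : ∀ i, P i * P i = 1)
    (hPiA0 : ∀ i, P i * A₀ = A₀ * P i)
    (hPiBp : ∀ i, P i * (Ap * Ap) = (Ap * Ap) * P i)
    (hPiBm : ∀ i, P i * (Am * Am) = (Am * Am) * P i)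
    (hPPAp : ∀ i j, i ≠ j → P i * (P j * Ap - Ap * P j) = (P j * Ap - Ap * P j) * P i)
    (hPPAm : ∀ i j, i ≠ j → P i * (P j * Am - Am * P j) = (P j * Am - Am * P j) * P i)
    :
    ∀ i j : Fin n, i ≠ j →
      (Cgen Am Ap (P i) * P j + Cgen Am Ap (P j) * P i
        = P i * Cgen Am Ap (P j) + P j * Cgen Am Ap (P i)) ∧
      (Cgen Am Ap (P i) * P j - P j * Cgen Am Ap (P i)
        = -(Cgen Am Ap (P j) * P i - P i * Cgen Am Ap (P j))) :=
  stmt6_general A₀ Ap Am P hpm hPiA0 hPPAp hPPAm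
end

section
/- For distinct indices i, j, k in {1,…,n}, the double commutator of two involutions with a 1-index element vanishes: [Pᵢ, [Pⱼ, C_k]] = 0. -/
/-!
Both commutators reduce to Leibniz rules. Writing `K = [A₊, P_k]` and `Q = [P_j, A₋]`, the
hypotheses make `P_j` commute with `P_k` and with `K`, so `[P_j, C_k] = ¼ {Q, K}`. Both `Q` and `K`
commute with `P_i`, hence so does `{Q, K}`.
-/

section

variable {R : Type*} [Ring R]

theorem commutator_anticommutator_of_commute {a b c : R} (h : Commute a c) :
    a * (b * c + c * b) - (b * c + c * b) * a = (a * b - b * a) * c + c * (a * b - b * a) := by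
  have expand : a * (b * c + c * b) - (b * c + c * b) * a
      = (a * b - b * a) * c + c * (a * b - b * a) + b * (a * c - c * a) + (a * c - c * a) * b := by
    noncomm_ring
  rw [expand, h.eq, sub_self, mul_zero, zero_mul, add_zero, add_zero]

variable [Algebra ℂ R]

theorem commutator_Cgen_of_commute {y Am Ap X : R} (hX : Commute y X)
    (hK : Commute y (Ap * X - X * Ap)) :
    y * Cgen Am Ap X - Cgen Am Ap X * y = (4 : ℂ)⁻¹ •
      ((y * Am - Am * y) * (Ap * X - X * Ap) + (Ap * X - X * Ap) * (y * Am - Am * y)) := by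
  rw [← commutator_anticommutator_of_commute hK, Cgen, mul_sub y, sub_mul _ _ y, mul_smul_comm,
    mul_smul_comm, smul_mul_assoc, smul_mul_assoc, hX.eq, smul_sub]
  abel

theorem commute_commutator_Cgen {x y Am Ap X : R} (hyX : Commute y X)
    (hyK : Commute y (X * Ap - Ap * X)) (hxK : Commute x (X * Ap - Ap * X))
    (hxQ : Commute x (y * Am - Am * y)) :
    Commute x (y * Cgen Am Ap X - Cgen Am Ap X * y) := by
  rw [← neg_sub, Commute.neg_right_iff] at hyK hxK
  rw [commutator_Cgen_of_commute hyX hyK]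
  exact ((hxQ.mul_right hxK).add_right (hxK.mul_right hxQ)).smul_right _

end

theorem stmt7_general
    {R : Type*} [Ring R] [Algebra ℂ R] {n : ℕ}
    (Ap Am : R) (P : Fin n → R)
    (hPcomm : ∀ i j : Fin n, Commute (P i) (P j))
    (hPPAp : ∀ i j, i ≠ j → P i * (P j * Ap - Ap * P j) = (P j * Ap - Ap * P j) * P i)
    (hPPAm : ∀ i j, i ≠ j → P i * (P j * Am - Am * P j) = (P j * Am - Am * P j) * P i)
    :
    ∀ i j k : Fin n, i ≠ j → j ≠ k → i ≠ k →
      P i * (P j * Cgen Am Ap (P k) - Cgen Am Ap (P k) * P j)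
        - (P j * Cgen Am Ap (P k) - Cgen Am Ap (P k) * P j) * P i = 0 := by
  intro i j k hij hjk hik
  exact sub_eq_zero.mpr
    (commute_commutator_Cgen (hPcomm j k) (hPPAp j k hjk) (hPPAp i k hik) (hPPAm i j hij)).eq

theorem stmt7
    {R : Type*} [Ring R] [Algebra ℂ R] {n : ℕ}
    (A₀ Ap Am Pb : R) (P : Fin n → R)
    (hPcomm : ∀ i j : Fin n, Commute (P i) (P j))
    (hPb : Pb = PS P hPcomm Finset.univ)
    (hPsq : Pb * Pb = 1)
    (hPA0 : Pb * A₀ = A₀ * Pb)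
    (hPAp : Pb * Ap + Ap * Pb = 0)
    (hPAm : Pb * Am + Am * Pb = 0)
    (hA0p : A₀ * Ap - Ap * A₀ = Ap)
    (hA0m : A₀ * Am - Am * A₀ = -Am)
    (hpm : Ap * Am + Am * Ap = 2 * A₀)
    (hPi2 : ∀ i, P i * P i = 1)
    (hPiA0 : ∀ i, P i * A₀ = A₀ * P i)
    (hPiBp : ∀ i, P i * (Ap * Ap) = (Ap * Ap) * P i)
    (hPiBm : ∀ i, P i * (Am * Am) = (Am * Am) * P i)
    (hPPAp : ∀ i j, i ≠ j → P i * (P j * Ap - Ap * P j) = (P j * Ap - Ap * P j) * P i)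
    (hPPAm : ∀ i j, i ≠ j → P i * (P j * Am - Am * P j) = (P j * Am - Am * P j) * P i)
    :
    ∀ i j k : Fin n, i ≠ j → j ≠ k → i ≠ k →
      P i * (P j * Cgen Am Ap (P k) - Cgen Am Ap (P k) * P j)
        - (P j * Cgen Am Ap (P k) - Cgen Am Ap (P k) * P j) * P i = 0 :=
  stmt7_general Ap Am P hPcomm hPPAp hPPAm
end

section
/- Suppose n = 3 and let (i,j,k) be a permutation of (1,2,3). Then the Casimir element admits the expression Γ = C_{ij} P_k + C_{jk} P_i + C_{ik} P_j − C_k Pᵢ Pⱼ − Cᵢ Pⱼ P_k − Cⱼ Pᵢ P_k − ½ Pᵢ Pⱼ P_k. -/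
section

variable {R : Type*} [Ring R]

def signedSplitSum (f : R → R → R) (a b c : R) : R :=
  f (a * b) c + f (b * c) a + f (a * c) b - f c (a * b) - f a (b * c) - f b (a * c)

section
variable {ι : Type*} {P : ι → R} {i j k : ι}

theorem signedSplitSum_mul_eq_zero (hcomm : ∀ i j, Commute (P i) (P j)) :
    signedSplitSum (· * ·) (P i) (P j) (P k) = 0 := by
  linear_combination (norm := noncomm_ring [signedSplitSum])
    P j * (hcomm k i).eq + (hcomm i k).eq * P j

theorem signedSplitSum_lie_mul (x : R) (hcomm : ∀ i j, Commute (P i) (P j))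
    (hx : ∀ i j, i ≠ j → Commute (P i) ⁅P j, x⁆) (hik : i ≠ k) :
    signedSplitSum (fun X Z => ⁅x, X⁆ * Z) (P i) (P j) (P k) = ⁅x, P i * P j * P k⁆ := by
  linear_combination (norm := noncomm_ring [signedSplitSum, Ring.lie_def])
    ⁅x, P j⁆ * (hcomm k i).eq + ⁅x, P i⁆ * (hcomm k j).eq - (hx i k hik).eq * P j
      + P j * (hx i k hik).eq - (hcomm j i).eq * ⁅P k, x⁆

theorem signedSplitSum_lie_mul_lie (x y : R)
    (hx : ∀ i j, i ≠ j → Commute (P i) ⁅P j, x⁆) (hy : ∀ i j, i ≠ j → Commute (P i) ⁅P j, y⁆)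
    (hij : i ≠ j) (hjk : j ≠ k) (hik : i ≠ k) :
    signedSplitSum (fun X Z => ⁅x, X⁆ * ⁅y, Z⁆) (P i) (P j) (P k) = 0 := by
  linear_combination (norm := noncomm_ring [signedSplitSum, Ring.lie_def])
    -((hx i j hij).eq * ⁅y, P k⁆) - ⁅x, P j⁆ * (hy k i hik.symm).eq
      - (hx j k hjk).eq * ⁅y, P i⁆ - ⁅x, P k⁆ * (hy j i hij.symm).eq
      - ⁅x, P i⁆ * (hy k j hjk.symm).eq - (hx i k hik).eq * ⁅y, P j⁆

end

theorem anticommutator_lie_of_anticommute {x y p : R} (hx : p * x + x * p = 0)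
    (hy : p * y + y * p = 0) : y * ⁅x, p⁆ + ⁅x, p⁆ * y = 2 * (⁅y, x⁆ * p) := by
  linear_combination (norm := noncomm_ring [Ring.lie_def]) -(y * hx) + 2 * (x * hy) - hx * y

theorem signedSplitSum_anticommutator_mul (x y a b c : R) :
    signedSplitSum (fun X Z => (y * ⁅x, X⁆ + ⁅x, X⁆ * y) * Z) a b c
      = y * signedSplitSum (fun X Z => ⁅x, X⁆ * Z) a b c
        + signedSplitSum (fun X Z => ⁅x, X⁆ * Z) a b c * y
        + signedSplitSum (fun X Z => ⁅x, X⁆ * ⁅y, Z⁆) a b c := by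
  simp only [signedSplitSum, Ring.lie_def]
  noncomm_ring

theorem signedSplitSum_Cgen_mul [Algebra ℂ R] (x y a b c : R) :
    signedSplitSum (fun X Z => Cgen y x X * Z) a b c
      = (4 : ℂ)⁻¹ • signedSplitSum (fun X Z => (y * ⁅x, X⁆ + ⁅x, X⁆ * y) * Z) a b c
        - (2 : ℂ)⁻¹ • signedSplitSum (· * ·) a b c := by
  simp only [signedSplitSum, Cgen, Ring.lie_def, sub_mul, smul_mul_assoc]
  module

theorem PS_univ_fin_three {M : Type*} [Monoid M] {P : Fin 3 → M}
    (hP : ∀ i j, Commute (P i) (P j)) {i j k : Fin 3} (hij : i ≠ j) (hjk : j ≠ k) (hik : i ≠ k) :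
    PS P hP Finset.univ = P i * P j * P k := by
  have hi : i ∉ ({j, k} : Finset (Fin 3)) := by simp [hij, hik]
  have hj : j ∉ ({k} : Finset (Fin 3)) := by simp [hjk]
  have huniv : ({i, j, k} : Finset (Fin 3)) = Finset.univ :=
    Finset.eq_univ_of_card _ (by rw [Finset.card_insert_of_notMem hi,
      Finset.card_insert_of_notMem hj, Finset.card_singleton]; rfl)
  rw [← huniv, PS]
  generalize_proofs
  rw [Finset.noncommProd_insert_of_notMem _ _ _ _ hi,
    Finset.noncommProd_insert_of_notMem _ _ _ _ hj, Finset.noncommProd_singleton, mul_assoc]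

end

theorem stmt9_general
    {R : Type*} [Ring R] [Algebra ℂ R] 
    (Ap Am Pb : R) (P : Fin 3 → R)
    (hPcomm : ∀ i j : Fin 3, Commute (P i) (P j))
    (hPb : Pb = PS P hPcomm Finset.univ)
    (hPAp : Pb * Ap + Ap * Pb = 0)
    (hPAm : Pb * Am + Am * Pb = 0)
    (hPPAp : ∀ i j, i ≠ j → P i * (P j * Ap - Ap * P j) = (P j * Ap - Ap * P j) * P i)
    (hPPAm : ∀ i j, i ≠ j → P i * (P j * Am - Am * P j) = (P j * Am - Am * P j) * P i)
    :
    ∀ i j k : Fin 3, i ≠ j → j ≠ k → i ≠ k →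
      (2 : ℂ)⁻¹ • ((Am * Ap - Ap * Am - 1) * Pb)
        = Cgen Am Ap (P i * P j) * P k + Cgen Am Ap (P j * P k) * P i
          + Cgen Am Ap (P i * P k) * P j
          - Cgen Am Ap (P k) * (P i * P j) - Cgen Am Ap (P i) * (P j * P k)
          - Cgen Am Ap (P j) * (P i * P k)
          - (2 : ℂ)⁻¹ • (P i * P j * P k) := by
  intro i j k hij hjk hik
  have hPb' : Pb = P i * P j * P k := hPb.trans (PS_univ_fin_three hPcomm hij hjk hik)
  have hx : ∀ i j, i ≠ j → Commute (P i) ⁅P j, Ap⁆ := hPPAp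
  have hy : ∀ i j, i ≠ j → Commute (P i) ⁅P j, Am⁆ := hPPAm
  show _ = signedSplitSum (fun X Z => Cgen Am Ap X * Z) (P i) (P j) (P k) - _
  rw [signedSplitSum_Cgen_mul, signedSplitSum_anticommutator_mul,
    signedSplitSum_lie_mul Ap hPcomm hx hik, signedSplitSum_lie_mul_lie Ap Am hx hy hij hjk hik,
    signedSplitSum_mul_eq_zero hPcomm, ← hPb', anticommutator_lie_of_anticommute hPAp hPAm,
    Ring.lie_def]
  simp only [add_zero, smul_zero, sub_zero, sub_mul, one_mul, two_mul, smul_add]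
  module

theorem stmt9
    {R : Type*} [Ring R] [Algebra ℂ R] 
    (A₀ Ap Am Pb : R) (P : Fin 3 → R)
    (hPcomm : ∀ i j : Fin 3, Commute (P i) (P j))
    (hPb : Pb = PS P hPcomm Finset.univ)
    (hPsq : Pb * Pb = 1)
    (hPA0 : Pb * A₀ = A₀ * Pb)
    (hPAp : Pb * Ap + Ap * Pb = 0)
    (hPAm : Pb * Am + Am * Pb = 0)
    (hA0p : A₀ * Ap - Ap * A₀ = Ap)
    (hA0m : A₀ * Am - Am * A₀ = -Am)
    (hpm : Ap * Am + Am * Ap = 2 * A₀)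
    (hPi2 : ∀ i, P i * P i = 1)
    (hPiA0 : ∀ i, P i * A₀ = A₀ * P i)
    (hPiBp : ∀ i, P i * (Ap * Ap) = (Ap * Ap) * P i)
    (hPiBm : ∀ i, P i * (Am * Am) = (Am * Am) * P i)
    (hPPAp : ∀ i j, i ≠ j → P i * (P j * Ap - Ap * P j) = (P j * Ap - Ap * P j) * P i)
    (hPPAm : ∀ i j, i ≠ j → P i * (P j * Am - Am * P j) = (P j * Am - Am * P j) * P i)
    :
    ∀ i j k : Fin 3, i ≠ j → j ≠ k → i ≠ k →
      (2 : ℂ)⁻¹ • ((Am * Ap - Ap * Am - 1) * Pb)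
        = Cgen Am Ap (P i * P j) * P k + Cgen Am Ap (P j * P k) * P i
          + Cgen Am Ap (P i * P k) * P j
          - Cgen Am Ap (P k) * (P i * P j) - Cgen Am Ap (P i) * (P j * P k)
          - Cgen Am Ap (P j) * (P i * P k)
          - (2 : ℂ)⁻¹ • (P i * P j * P k) :=
  stmt9_general Ap Am Pb P hPcomm hPb hPAp hPAm hPPAp hPPAm
end

section
/- Set Q = Q₁₂ + Q₁₃ + Q₂₃ and C = C₁₂² + C₁₃² + C₂₃² − a²Q² − 4abQ. Then C is a Casimir operator of the hyperoctahedral extension of the Bannai-Ito algebra: [C, C₁₂] = [C, C₁₃] = [C, C₂₃] = 0 and [C, Cᵢ] = 0 for i = 1, 2, 3, where Cᵢ = a(Q_{ij} + Q_{ik}) + b for {i,j,k} = {1,2,3}. -/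
/-!
Every `Q_{ij}` permutes the `C`'s and the `Q`'s by conjugation, so it commutes with `Q` and with
`C₁₂² + C₁₃² + C₂₃²`, hence with the Casimir `C`. By the same symmetry, once `C₁₂` commutes with `C`
so do its conjugates `C₁₃ = Q₂₃ C₁₂ Q₂₃` and `C₂₃ = Q₁₃ C₁₂ Q₁₃`. For `C₁₂` itself one uses
`[X, Y²] = [{X, Y}, Y]`: the anticommutator relations reduce `[C₁₂, C₁₃² + C₂₃²]` to brackets of
`C₁₃, C₂₃` with lower-order terms in the `Q`'s, and these add up to `a² [C₁₂, Q²] + 4ab [C₁₂, Q]`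
because `Q² = 3 + 3 T` with `T = Q₁₂Q₁₃ + Q₁₃Q₁₂` commuting with `C₁₂ + C₁₃ + C₂₃`.
-/

theorem forall_ne_of_symm_fin_three {α : Type*} {P : α → Prop} (f : Fin 3 → Fin 3 → α)
    (hf : ∀ i j, f i j = f j i) (h01 : P (f 0 1)) (h02 : P (f 0 2)) (h12 : P (f 1 2)) :
    ∀ i j, i ≠ j → P (f i j) := by
  intro i j hij
  fin_cases i <;> fin_cases j <;>
    first
    | exact absurd rfl hij
    | assumption
    | (rw [hf]; assumption)

section Commutators

-- Local, as in Mathlib: in scope it gives a second path to the additive structure of every ring.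
attribute [local instance] LieRing.ofAssociativeRing

section Ring

variable {R : Type*} [Ring R]

theorem commute_add_add_of_semiconjBy {u p q r : R} (hp : Commute u p) (hq : SemiconjBy u q r)
    (hr : SemiconjBy u r q) : Commute u (p + q + r) := by
  have h := (SemiconjBy.add_right hp hq).add_right hr
  rwa [add_right_comm p r q] at h

theorem commute_of_semiconjBy_of_mul_self_eq_one {u v w X : R} (hu : u * u = 1)
    (huv : SemiconjBy u v w) (huX : Commute u X) (hvX : Commute v X) : Commute w X := by
  have hw : w = u * v * u := by rw [huv.eq, mul_assoc, hu, mul_one]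
  rw [hw]
  exact (huX.mul_left hvX).mul_left huX

theorem lie_mul_self_add_lie_mul_self {A B D S S' : R} (hAB : A * B + B * A = D + S)
    (hAD : A * D + D * A = B + S') : ⁅A, B * B⁆ + ⁅A, D * D⁆ = ⁅S, B⁆ + ⁅S', D⁆ := by
  have key : ∀ X Y : R, ⁅X, Y * Y⁆ = ⁅X * Y + Y * X, Y⁆ := fun X Y => by
    simp only [Ring.lie_def]; noncomm_ring
  rw [key, key, hAB, hAD, add_lie, add_lie, ← lie_skew B D]
  abel

end Ring

variable {R : Type*} [Ring R] [Algebra ℂ R]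

/-- The terms of `{C_{ij}, C_{jk}}` besides `C_{ik}`, for `u = Q_{ij}`, `v = Q_{jk}`, `w = Q_{ik}`. -/
def bannaiItoCorrection (Γ : R) (a b : ℂ) (u v w : R) : R :=
  (2 : ℂ) • (Γ * (a • (u + v) + b • (1 : R)))
    + (a ^ 2) • ((3 : ℂ) • (u * v + v * u) + (2 : ℂ) • (1 : R))
    + (2 * a * b) • (u + v + (2 : ℂ) • w) + (2 * b ^ 2) • (1 : R)

theorem lie_bannaiItoCorrection {Γ X : R} (hΓX : Commute Γ X) (a b : ℂ) (u v w : R) :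
    ⁅bannaiItoCorrection Γ a b u v w, X⁆
      = (2 * a) • (Γ * ⁅u + v, X⁆) + (3 * a ^ 2) • ⁅u * v + v * u, X⁆
        + (2 * a * b) • ⁅u + v + (2 : ℂ) • w, X⁆ := by
  have hΓ : ∀ Y : R, ⁅Γ * Y, X⁆ = Γ * ⁅Y, X⁆ := fun Y => by
    simp only [Ring.lie_def, mul_sub, mul_assoc]
    rw [← mul_assoc X, ← hΓX.eq, mul_assoc]
  have h1 : ⁅(1 : R), X⁆ = 0 := (Commute.one_left X).lie_eq
  simp only [bannaiItoCorrection, add_lie, smul_lie, hΓ, mul_add, mul_smul_comm, h1, smul_zero,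
    mul_zero]
  module

def casimir (a b : ℂ) (A B D q : R) : R :=
  A * A + B * B + D * D - (a ^ 2) • (q * q) - (4 * a * b) • q

theorem Commute.casimir {u : R} (a b : ℂ) {A B D q : R} (hC : Commute u (A * A + B * B + D * D))
    (hq : Commute u q) : Commute u (casimir a b A B D q) :=
  (hC.sub_right ((hq.mul_right hq).smul_right _)).sub_right (hq.smul_right _)

/-- The relations among `x = Q₁₂, y = Q₁₃, z = Q₂₃` and `A = C₁₂, B = C₁₃, D = C₂₃`. -/
structure HyperoctahedralBannaiIto (a b : ℂ) (Γ x y z A B D : R) : Prop where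
  x_mul_self : x * x = 1
  y_mul_self : y * y = 1
  z_mul_self : z * z = 1
  x_mul_y : x * y = z * x
  z_mul_x : z * x = y * z
  x_mul_z : x * z = z * y
  z_mul_y : z * y = y * x
  x_A : Commute x A
  x_B : SemiconjBy x B D
  x_D : SemiconjBy x D B
  y_A : SemiconjBy y A D
  y_B : Commute y B
  y_D : SemiconjBy y D A
  z_A : SemiconjBy z A B
  z_B : SemiconjBy z B A
  z_D : Commute z D
  Γ_B : Commute Γ B
  Γ_D : Commute Γ D
  anticomm_A_B : A * B + B * A = D + bannaiItoCorrection Γ a b x y z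
  anticomm_A_D : A * D + D * A = B + bannaiItoCorrection Γ a b x z y

namespace HyperoctahedralBannaiIto

variable {a b : ℂ} {Γ x y z A B D : R}

theorem sum_mul_self (h : HyperoctahedralBannaiIto a b Γ x y z A B D) :
    (x + y + z) * (x + y + z) = (3 : ℂ) • (1 : R) + (3 : ℂ) • (x * y + y * x) := by
  have hxz : x * z = y * x := h.x_mul_z.trans h.z_mul_y
  have hzx : z * x = x * y := h.x_mul_y.symm
  have hyz : y * z = x * y := h.z_mul_x.symm.trans hzx
  simp only [add_mul, mul_add, h.x_mul_self, h.y_mul_self, h.z_mul_self, hxz, hzx, hyz, h.z_mul_y]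
  module

theorem x_mul_z_add_z_mul_x (h : HyperoctahedralBannaiIto a b Γ x y z A B D) :
    x * z + z * x = x * y + y * x := by
  rw [h.x_mul_z, h.z_mul_y, ← h.x_mul_y, add_comm]

theorem commute_x_sum (h : HyperoctahedralBannaiIto a b Γ x y z A B D) :
    Commute x (x + y + z) :=
  commute_add_add_of_semiconjBy (Commute.refl x) h.x_mul_y (h.x_mul_z.trans h.z_mul_y)

theorem commute_y_sum (h : HyperoctahedralBannaiIto a b Γ x y z A B D) :
    Commute y (x + y + z) := by
  have hy := commute_add_add_of_semiconjBy (Commute.refl y) h.z_mul_y.symm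
    (h.z_mul_x.symm.trans h.x_mul_y.symm)
  rwa [add_comm y x] at hy

theorem commute_z_sum (h : HyperoctahedralBannaiIto a b Γ x y z A B D) :
    Commute z (x + y + z) := by
  have hz := commute_add_add_of_semiconjBy (Commute.refl z) h.z_mul_x h.x_mul_z.symm
  rwa [add_comm z x, add_right_comm] at hz

theorem commute_x_casimir (h : HyperoctahedralBannaiIto a b Γ x y z A B D) :
    Commute x (casimir a b A B D (x + y + z)) :=
  (commute_add_add_of_semiconjBy (h.x_A.mul_right h.x_A) (h.x_B.mul_right h.x_B)
    (h.x_D.mul_right h.x_D)).casimir a b h.commute_x_sum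

theorem commute_y_casimir (h : HyperoctahedralBannaiIto a b Γ x y z A B D) :
    Commute y (casimir a b A B D (x + y + z)) := by
  have hC := commute_add_add_of_semiconjBy (h.y_B.mul_right h.y_B) (h.y_A.mul_right h.y_A)
    (h.y_D.mul_right h.y_D)
  rw [add_comm (B * B)] at hC
  exact hC.casimir a b h.commute_y_sum

theorem commute_z_casimir (h : HyperoctahedralBannaiIto a b Γ x y z A B D) :
    Commute z (casimir a b A B D (x + y + z)) := by
  have hC := commute_add_add_of_semiconjBy (h.z_D.mul_right h.z_D) (h.z_A.mul_right h.z_A)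
    (h.z_B.mul_right h.z_B)
  rw [add_comm (D * D), add_right_comm] at hC
  exact hC.casimir a b h.commute_z_sum

theorem commute_threeCycles_sum (h : HyperoctahedralBannaiIto a b Γ x y z A B D) :
    Commute (x * y + y * x) (A + B + D) := by
  have hx : Commute x (A + B + D) := commute_add_add_of_semiconjBy h.x_A h.x_B h.x_D
  have hy : Commute y (A + B + D) := by
    have hy := commute_add_add_of_semiconjBy h.y_B h.y_A h.y_D
    rwa [add_comm B A] at hy
  exact (hx.mul_left hy).add_left (hy.mul_left hx)

theorem commute_A_casimir (h : HyperoctahedralBannaiIto a b Γ x y z A B D) :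
    Commute A (casimir a b A B D (x + y + z)) := by
  have hsq := lie_mul_self_add_lie_mul_self h.anticomm_A_B h.anticomm_A_D
  rw [lie_bannaiItoCorrection h.Γ_B, lie_bannaiItoCorrection h.Γ_D, h.x_mul_z_add_z_mul_x] at hsq
  have hΓ : Γ * ⁅x + y, B⁆ + Γ * ⁅x + z, D⁆ = 0 := by
    rw [← mul_add, Ring.lie_def, Ring.lie_def]
    simp only [add_mul, mul_add, h.x_B.eq, h.x_D.eq, h.y_B.eq, h.z_D.eq]
    noncomm_ring
  have hT : ⁅x * y + y * x, B⁆ + ⁅x * y + y * x, D⁆ = ⁅A, x * y + y * x⁆ := by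
    have h0 := h.commute_threeCycles_sum.lie_eq
    rw [lie_add, lie_add] at h0
    rw [← lie_skew A]
    linear_combination (norm := module) h0
  have hQ : ⁅x + y + (2 : ℂ) • z, B⁆ + ⁅x + z + (2 : ℂ) • y, D⁆ = (2 : ℂ) • ⁅A, x + y + z⁆ := by
    simp only [Ring.lie_def, add_mul, mul_add, smul_mul_assoc, mul_smul_comm, h.x_B.eq, h.x_D.eq,
      h.y_B.eq, h.z_D.eq, h.z_B.eq, h.y_D.eq, h.x_A.eq, h.y_A.eq, h.z_A.eq]
    module
  have hA : ⁅A, A * A⁆ = 0 := ((Commute.refl A).mul_right (Commute.refl A)).lie_eq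
  have h1 : ⁅A, (1 : R)⁆ = 0 := (Commute.one_right A).lie_eq
  rw [commute_iff_lie_eq, casimir, lie_sub, lie_sub, lie_add, lie_add, lie_smul, lie_smul,
    h.sum_mul_self, lie_add, lie_smul, lie_smul, hA, h1]
  linear_combination (norm := module) hsq + (2 * a) • hΓ + (3 * a ^ 2) • hT + (2 * a * b) • hQ

theorem commute_B_casimir (h : HyperoctahedralBannaiIto a b Γ x y z A B D) :
    Commute B (casimir a b A B D (x + y + z)) :=
  commute_of_semiconjBy_of_mul_self_eq_one h.z_mul_self h.z_A h.commute_z_casimir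
    h.commute_A_casimir

theorem commute_D_casimir (h : HyperoctahedralBannaiIto a b Γ x y z A B D) :
    Commute D (casimir a b A B D (x + y + z)) :=
  commute_of_semiconjBy_of_mul_self_eq_one h.y_mul_self h.y_A h.commute_y_casimir
    h.commute_A_casimir

end HyperoctahedralBannaiIto

end Commutators

theorem stmt19_general
    {R : Type*} [Ring R] [Algebra ℂ R] (a b : ℂ)
    (Q C : Fin 3 → Fin 3 → R) (Γ : R)
    (hQsym : ∀ i j, Q i j = Q j i)
    (hCsym : ∀ i j, C i j = C j i)
    (hQ2 : ∀ i j, i ≠ j → Q i j * Q i j = 1)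
    (hg1 : Q 0 1 * Q 0 2 = Q 1 2 * Q 0 1)
    (hg2 : Q 1 2 * Q 0 1 = Q 0 2 * Q 1 2)
    (hg3 : Q 0 1 * Q 1 2 = Q 1 2 * Q 0 2)
    (hg4 : Q 1 2 * Q 0 2 = Q 0 2 * Q 0 1)
    (hQC : ∀ i j, i ≠ j → Q i j * C i j = C i j * Q i j)
    (hi1 : Q 0 1 * C 0 2 = C 1 2 * Q 0 1)
    (hi2 : Q 0 1 * C 1 2 = C 0 2 * Q 0 1)
    (hi3 : Q 0 2 * C 0 1 = C 1 2 * Q 0 2)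
    (hi4 : Q 0 2 * C 1 2 = C 0 1 * Q 0 2)
    (hi5 : Q 1 2 * C 0 1 = C 0 2 * Q 1 2)
    (hi6 : Q 1 2 * C 0 2 = C 0 1 * Q 1 2)
    (hΓC : ∀ i j, i ≠ j → Γ * C i j = C i j * Γ)
    (hBI : ∀ i j k : Fin 3, i ≠ j → j ≠ k → i ≠ k →
      C i j * C j k + C j k * C i j
        = C i k + (2 : ℂ) • (Γ * (a • (Q i j + Q j k) + b • (1 : R)))
          + (a ^ 2) • ((3 : ℂ) • (Q i j * Q j k + Q j k * Q i j) + (2 : ℂ) • (1 : R))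
          + (2 * a * b) • (Q i j + Q j k + (2 : ℂ) • Q i k)
          + (2 * b ^ 2) • (1 : R))
    (Qs Cas : R)
    (hQs : Qs = Q 0 1 + Q 0 2 + Q 1 2)
    (hCas : Cas = C 0 1 * C 0 1 + C 0 2 * C 0 2 + C 1 2 * C 1 2
      - (a ^ 2) • (Qs * Qs) - (4 * a * b) • Qs) :
    (∀ i j : Fin 3, i ≠ j → Cas * C i j = C i j * Cas) ∧
    (∀ i j k : Fin 3, i ≠ j → j ≠ k → i ≠ k →
      Cas * (a • (Q i j + Q i k) + b • (1 : R))
        = (a • (Q i j + Q i k) + b • (1 : R)) * Cas) := by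
  subst hQs
  obtain rfl : Cas = casimir a b (C 0 1) (C 0 2) (C 1 2) (Q 0 1 + Q 0 2 + Q 1 2) := hCas
  have h : HyperoctahedralBannaiIto a b Γ (Q 0 1) (Q 0 2) (Q 1 2) (C 0 1) (C 0 2) (C 1 2) :=
    { x_mul_self := hQ2 0 1 (by decide), y_mul_self := hQ2 0 2 (by decide),
      z_mul_self := hQ2 1 2 (by decide),
      x_mul_y := hg1, z_mul_x := hg2, x_mul_z := hg3, z_mul_y := hg4,
      x_A := hQC 0 1 (by decide), x_B := hi1, x_D := hi2,
      y_A := hi3, y_B := hQC 0 2 (by decide), y_D := hi4,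
      z_A := hi5, z_B := hi6, z_D := hQC 1 2 (by decide),
      Γ_B := hΓC 0 2 (by decide), Γ_D := hΓC 1 2 (by decide),
      anticomm_A_B := by
        have h102 := hBI 1 0 2 (by decide) (by decide) (by decide)
        rw [hCsym 1 0, hQsym 1 0] at h102
        rw [h102, bannaiItoCorrection]
        abel
      anticomm_A_D := by
        rw [hBI 0 1 2 (by decide) (by decide) (by decide), bannaiItoCorrection]
        abel }
  have hQ : ∀ i j, i ≠ j → Commute _ (Q i j) := forall_ne_of_symm_fin_three Q hQsym
    h.commute_x_casimir.symm h.commute_y_casimir.symm h.commute_z_casimir.symm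
  refine ⟨forall_ne_of_symm_fin_three C hCsym h.commute_A_casimir.symm h.commute_B_casimir.symm
    h.commute_D_casimir.symm, fun i j k hij _ hik => ?_⟩
  exact (((hQ i j hij).add_right (hQ i k hik)).smul_right a).add_right
    ((Commute.one_right _).smul_right b)

theorem stmt19
    {R : Type*} [Ring R] [Algebra ℂ R] (a b : ℂ)
    (Q C : Fin 3 → Fin 3 → R) (Γ : R)
    (hQsym : ∀ i j, Q i j = Q j i)
    (hCsym : ∀ i j, C i j = C j i)
    (hQ2 : ∀ i j, i ≠ j → Q i j * Q i j = 1)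
    (hg1 : Q 0 1 * Q 0 2 = Q 1 2 * Q 0 1)
    (hg2 : Q 1 2 * Q 0 1 = Q 0 2 * Q 1 2)
    (hg3 : Q 0 1 * Q 1 2 = Q 1 2 * Q 0 2)
    (hg4 : Q 1 2 * Q 0 2 = Q 0 2 * Q 0 1)
    (hQC : ∀ i j, i ≠ j → Q i j * C i j = C i j * Q i j)
    (hi1 : Q 0 1 * C 0 2 = C 1 2 * Q 0 1)
    (hi2 : Q 0 1 * C 1 2 = C 0 2 * Q 0 1)
    (hi3 : Q 0 2 * C 0 1 = C 1 2 * Q 0 2)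
    (hi4 : Q 0 2 * C 1 2 = C 0 1 * Q 0 2)
    (hi5 : Q 1 2 * C 0 1 = C 0 2 * Q 1 2)
    (hi6 : Q 1 2 * C 0 2 = C 0 1 * Q 1 2)
    (hΓC : ∀ i j, i ≠ j → Γ * C i j = C i j * Γ)
    (hΓQ : ∀ i j, i ≠ j → Γ * Q i j = Q i j * Γ)
    (hBI : ∀ i j k : Fin 3, i ≠ j → j ≠ k → i ≠ k →
      C i j * C j k + C j k * C i j
        = C i k + (2 : ℂ) • (Γ * (a • (Q i j + Q j k) + b • (1 : R)))
          + (a ^ 2) • ((3 : ℂ) • (Q i j * Q j k + Q j k * Q i j) + (2 : ℂ) • (1 : R))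
          + (2 * a * b) • (Q i j + Q j k + (2 : ℂ) • Q i k)
          + (2 * b ^ 2) • (1 : R))
    (Qs Cas : R)
    (hQs : Qs = Q 0 1 + Q 0 2 + Q 1 2)
    (hCas : Cas = C 0 1 * C 0 1 + C 0 2 * C 0 2 + C 1 2 * C 1 2
      - (a ^ 2) • (Qs * Qs) - (4 * a * b) • Qs) :
    (∀ i j : Fin 3, i ≠ j → Cas * C i j = C i j * Cas) ∧
    (∀ i j k : Fin 3, i ≠ j → j ≠ k → i ≠ k →
      Cas * (a • (Q i j + Q i k) + b • (1 : R))
        = (a • (Q i j + Q i k) + b • (1 : R)) * Cas) :=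
  stmt19_general a b Q C Γ hQsym hCsym hQ2 hg1 hg2 hg3 hg4 hQC hi1 hi2 hi3 hi4 hi5 hi6 hΓC hBI Qs
    Cas hQs hCas
end
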